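/- Let A be a nonempty finite alphabet, let n ≥ 1, and let W ⊆ F_A(n) be a set of words of length n. Let X be the set of all words in F_A having a prefix in W and let Y be the set of all words in F_A having a suffix in W. Then for every m ≥ n, d_X(m) = d_Y(m) = |W|/|A|^n, and for every m ≥ 2n, the density of the product set X·Y = {x·y : x ∈ X, y ∈ Y} in the layer F_A(m) is at most (|W|/|A|^n)². -/
import Mathlib


open Filter

/-- Density of `S` in the layer of words of length `n`:  `|S ∩ F_A(n)| / |A|^n`. -/
noncomputable def layerDensity (A : Type*) [Fintype A] (S : Set (List A)) (n : ℕ) : ℝ :=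
  ({w ∈ S | w.length = n} : Set (List A)).ncard / (Fintype.card A : ℝ) ^ n

/-- `S` is product-free under concatenation. -/
def ProductFree {A : Type*} (S : Set (List A)) : Prop := ∀ x ∈ S, ∀ y ∈ S, x ++ y ∉ S

/-- Upper asymptotic density: `limsup_{n → ∞} (∑_{i=1}^{n} d_S(i)) / n`. -/
noncomputable def upperAsympDensity (A : Type*) [Fintype A] (S : Set (List A)) : ℝ :=
  Filter.limsup (fun n : ℕ => (∑ i ∈ Finset.Icc 1 n, layerDensity A S i) / n) Filter.atTop

/-- Upper Banach density: `limsup_{n - m → ∞} (∑_{i=m}^{n} d_S(i)) / (n - m + 1)`. -/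
noncomputable def upperBanachDensity (A : Type*) [Fintype A] (S : Set (List A)) : ℝ :=
  Filter.limsup
    (fun p : ℕ × ℕ => (∑ i ∈ Finset.Icc p.1 p.2, layerDensity A S i) / ((p.2 - p.1 : ℕ) + 1))
    (Filter.comap (fun p : ℕ × ℕ => p.2 - p.1) Filter.atTop)

/-- `d_S(n; L)`: density in the layer of length-`n` words of the set of words of `S` of
length `n` having no prefix in `S` of length belonging to `L`. -/
noncomputable def restrictedDensity (A : Type*) [Fintype A] (S : Set (List A)) (n : ℕ)
    (L : Set ℕ) : ℝ :=
  ({w | w ∈ S ∧ w.length = n ∧ ∀ x ∈ S, x.length ∈ L → ¬ x <+: w} : Set (List A)).ncard /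
    (Fintype.card A : ℝ) ^ n

/-- The odd-occurrence set `O_Γ`: words in which the total number of occurrences of
symbols from `Γ` is odd. -/
def oddOcc {A : Type*} [DecidableEq A] (Γ : Finset A) : Set (List A) :=
  {w | Odd (w.countP (fun a => decide (a ∈ Γ)))}



lemma ncard_length_eq (A : Type*) [Fintype A] (k : ℕ) :
    ({v : List A | v.length = k} : Set (List A)).ncard = Fintype.card A ^ k := by
  rw [← Nat.card_coe_set_eq]
  have e : ({v : List A | v.length = k} : Set (List A)) ≃ List.Vector A k :=
    Equiv.subtypeEquivRight (fun _ => Iff.rfl)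
  rw [Nat.card_congr e, Nat.card_eq_fintype_card, card_vector]

lemma ncard_prod_set {α β : Type*} (s : Set α) (t : Set β) :
    (s ×ˢ t).ncard = s.ncard * t.ncard := by
  rw [← Nat.card_coe_set_eq, ← Nat.card_coe_set_eq, ← Nat.card_coe_set_eq,
    Nat.card_congr (Equiv.Set.prod s t), Nat.card_prod]

section Counts
variable {A : Type*} [Fintype A] {n : ℕ} {W : Set (List A)} (hW : ∀ w ∈ W, w.length = n)

include hW

lemma prefix_count {m : ℕ} (hm : n ≤ m) :
    ({w | (∃ u ∈ W, u <+: w) ∧ w.length = m} : Set (List A)).ncard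
      = W.ncard * Fintype.card A ^ (m - n) := by
  have himg : ({w | (∃ u ∈ W, u <+: w) ∧ w.length = m} : Set (List A))
      = (fun p : List A × List A => p.1 ++ p.2) '' (W ×ˢ {v | v.length = m - n}) := by
    ext w
    constructor
    · rintro ⟨⟨u, huW, v, rfl⟩, hlen⟩
      refine ⟨(u, v), ⟨huW, ?_⟩, rfl⟩
      have := hW u huW
      simp only [List.length_append] at hlen
      simp only [Set.mem_setOf_eq]
      omega
    · rintro ⟨⟨u, v⟩, ⟨huW, hv⟩, rfl⟩
      refine ⟨⟨u, huW, List.prefix_append u v⟩, ?_⟩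
      have := hW u huW
      simp only [Set.mem_setOf_eq] at hv
      simp only [List.length_append]
      omega
  have hinj : Set.InjOn (fun p : List A × List A => p.1 ++ p.2)
      (W ×ˢ {v | v.length = m - n}) := by
    rintro ⟨u1, v1⟩ ⟨h1, _⟩ ⟨u2, v2⟩ ⟨h2, _⟩ h
    obtain ⟨h3, h4⟩ := List.append_inj h (by rw [hW u1 h1, hW u2 h2])
    exact Prod.ext h3 h4
  rw [himg, Set.ncard_image_of_injOn hinj, ncard_prod_set, ncard_length_eq]

lemma suffix_count {m : ℕ} (hm : n ≤ m) :
    ({w | (∃ u ∈ W, u <:+ w) ∧ w.length = m} : Set (List A)).ncard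
      = W.ncard * Fintype.card A ^ (m - n) := by
  have himg : ({w | (∃ u ∈ W, u <:+ w) ∧ w.length = m} : Set (List A))
      = (fun p : List A × List A => p.2 ++ p.1) '' (W ×ˢ {v | v.length = m - n}) := by
    ext w
    constructor
    · rintro ⟨⟨u, huW, v, rfl⟩, hlen⟩
      refine ⟨(u, v), ⟨huW, ?_⟩, rfl⟩
      have := hW u huW
      simp only [List.length_append] at hlen
      simp only [Set.mem_setOf_eq]
      omega
    · rintro ⟨⟨u, v⟩, ⟨huW, hv⟩, rfl⟩
      refine ⟨⟨u, huW, List.suffix_append v u⟩, ?_⟩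
      have := hW u huW
      simp only [Set.mem_setOf_eq] at hv
      simp only [List.length_append]
      omega
  have hinj : Set.InjOn (fun p : List A × List A => p.2 ++ p.1)
      (W ×ˢ {v | v.length = m - n}) := by
    rintro ⟨u1, v1⟩ ⟨h1, _⟩ ⟨u2, v2⟩ ⟨h2, _⟩ h
    obtain ⟨h3, h4⟩ := List.append_inj' h (by rw [hW u1 h1, hW u2 h2])
    exact Prod.ext h4 h3
  rw [himg, Set.ncard_image_of_injOn hinj, ncard_prod_set, ncard_length_eq]

lemma both_count_le {m : ℕ} (hm : 2 * n ≤ m) :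
    ({w | ((∃ u ∈ W, u <+: w) ∧ ∃ u ∈ W, u <:+ w) ∧ w.length = m} : Set (List A)).ncard
      ≤ W.ncard * W.ncard * Fintype.card A ^ (m - 2 * n) := by
  set g : (List A × List A) × List A → List A := fun p => p.1.1 ++ p.1.2 ++ p.2 with hg
  set D := (W ×ˢ {v : List A | v.length = m - 2 * n}) ×ˢ W with hD
  have hDfin : D.Finite := by
    have hWfin : W.Finite := (List.finite_length_eq A n).subset (fun w hw => hW w hw)
    exact ((hWfin.prod (List.finite_length_eq A (m - 2 * n))).prod hWfin)
  have hsub : ({w | ((∃ u ∈ W, u <+: w) ∧ ∃ u ∈ W, u <:+ w) ∧ w.length = m} : Set (List A))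
      ⊆ g '' D := by
    rintro w ⟨⟨⟨u, huW, r, rfl⟩, u', hu'W, hsuf⟩, hlen⟩
    have hu := hW u huW
    have hu' := hW u' hu'W
    simp only [List.length_append] at hlen
    have hr : u' <:+ r := by
      refine List.suffix_of_suffix_length_le hsuf (List.suffix_append u r) ?_
      omega
    obtain ⟨t, ht⟩ := hr
    refine ⟨((u, t), u'), ⟨⟨huW, ?_⟩, hu'W⟩, by simp [g, ht]⟩
    have := congrArg List.length ht
    simp only [List.length_append] at this
    simp only [Set.mem_setOf_eq]
    omega
  calc _ ≤ (g '' D).ncard := Set.ncard_le_ncard hsub (hDfin.image g)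
    _ ≤ D.ncard := Set.ncard_image_le hDfin
    _ = W.ncard * W.ncard * Fintype.card A ^ (m - 2 * n) := by
        rw [hD, ncard_prod_set, ncard_prod_set, ncard_length_eq]; ring

end Counts


/-- For `W` a set of words of length `n`, with `X` the words having a prefix in `W` and
`Y` the words having a suffix in `W`: for `m ≥ n`, `d_X(m) = d_Y(m) = |W|/|A|^n`, and
for `m ≥ 2n` the density of `X ⬝ Y` in the layer `F_A(m)` is at most `(|W|/|A|^n)²`. -/
theorem prefix_suffix_density
    {A : Type*} [Fintype A] [Nonempty A] {n : ℕ} (hn : 1 ≤ n)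
    (W : Set (List A)) (hW : ∀ w ∈ W, w.length = n)
    (X Y : Set (List A))
    (hX : X = {w | ∃ u ∈ W, u <+: w}) (hY : Y = {w | ∃ u ∈ W, u <:+ w}) :
    (∀ m, n ≤ m →
      layerDensity A X m = W.ncard / (Fintype.card A : ℝ) ^ n ∧
      layerDensity A Y m = W.ncard / (Fintype.card A : ℝ) ^ n) ∧
    (∀ m, 2 * n ≤ m →
      layerDensity A {z | ∃ x ∈ X, ∃ y ∈ Y, z = x ++ y} m ≤
        (W.ncard / (Fintype.card A : ℝ) ^ n) ^ 2) := by
  have hq : (0:ℝ) < (Fintype.card A : ℝ) := by exact_mod_cast Fintype.card_pos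
  constructor
  · intro m hm
    have hqm : (Fintype.card A : ℝ) ^ m
        = (Fintype.card A : ℝ) ^ (m - n) * (Fintype.card A : ℝ) ^ n := by
      rw [← pow_add]; congr 1; omega
    constructor
    · rw [layerDensity, hX]
      have : ({w ∈ {w | ∃ u ∈ W, u <+: w} | w.length = m} : Set (List A))
          = {w | (∃ u ∈ W, u <+: w) ∧ w.length = m} := rfl
      rw [this, prefix_count hW hm]
      push_cast
      rw [hqm, div_eq_div_iff (by positivity) (by positivity)]
      ring
    · rw [layerDensity, hY]
      have : ({w ∈ {w | ∃ u ∈ W, u <:+ w} | w.length = m} : Set (List A))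
          = {w | (∃ u ∈ W, u <:+ w) ∧ w.length = m} := rfl
      rw [this, suffix_count hW hm]
      push_cast
      rw [hqm, div_eq_div_iff (by positivity) (by positivity)]
      ring
  · intro m hm
    have hqm : (Fintype.card A : ℝ) ^ m
        = (Fintype.card A : ℝ) ^ (m - 2 * n) * ((Fintype.card A : ℝ) ^ n) ^ 2 := by
      rw [← pow_mul, ← pow_add]; congr 1; omega
    have hsub : ({w ∈ {z | ∃ x ∈ X, ∃ y ∈ Y, z = x ++ y} | w.length = m} : Set (List A))
        ⊆ {w | ((∃ u ∈ W, u <+: w) ∧ ∃ u ∈ W, u <:+ w) ∧ w.length = m} := by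
      rintro w ⟨⟨x, hx, y, hy, rfl⟩, hlen⟩
      rw [hX] at hx; rw [hY] at hy
      obtain ⟨u, huW, hu⟩ := hx
      obtain ⟨u', hu'W, hu'⟩ := hy
      exact ⟨⟨⟨u, huW, hu.trans (List.prefix_append x y)⟩,
        ⟨u', hu'W, hu'.trans (List.suffix_append x y)⟩⟩, hlen⟩
    have hfin : ({w | ((∃ u ∈ W, u <+: w) ∧ ∃ u ∈ W, u <:+ w) ∧ w.length = m}
        : Set (List A)).Finite :=
      (List.finite_length_eq A m).subset (fun w hw => hw.2)
    have hcard : ({w ∈ {z | ∃ x ∈ X, ∃ y ∈ Y, z = x ++ y} | w.length = m}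
        : Set (List A)).ncard ≤ W.ncard * W.ncard * Fintype.card A ^ (m - 2 * n) :=
      le_trans (Set.ncard_le_ncard hsub hfin) (both_count_le hW hm)
    rw [layerDensity]
    calc _ ≤ ((W.ncard * W.ncard * Fintype.card A ^ (m - 2 * n) : ℕ) : ℝ)
            / (Fintype.card A : ℝ) ^ m := by
          gcongr ?_ / _
          · exact_mod_cast hcard
      _ = (W.ncard / (Fintype.card A : ℝ) ^ n) ^ 2 := by
          push_cast
          rw [div_pow, hqm, div_eq_div_iff (by positivity) (by positivity)]
          ring
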